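/- If V is a finitely generated B-torsion FI^m-module over a Noetherian ring k, then there exists a positive integer N such that V_r = 0 for every vector r = (r_1,...,r_m) with r_i ≥ N for all i. -/

import Mathlib

open CategoryTheory Limits
section EXT
variable {a b c N : ℕ}
def extEmb (g : Fin a ↪ Fin b) (N : ℕ) : Fin (a + N) ↪ Fin (b + N) where
  toFun x := if h : (x : ℕ) < a then ⟨g ⟨x, h⟩, by have := (g ⟨x, h⟩).isLt; omega⟩
    else ⟨(x : ℕ) - a + b, by have := x.isLt; omega⟩
  inj' := by
    intro x y hxy
    simp only at hxy
    by_cases hx : (x : ℕ) < a <;> by_cases hy : (y : ℕ) < a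
    · rw [dif_pos hx, dif_pos hy, Fin.mk.injEq] at hxy
      have h2 : (⟨(x : ℕ), hx⟩ : Fin a) = ⟨(y : ℕ), hy⟩ := g.injective (Fin.ext hxy)
      rw [Fin.mk.injEq] at h2
      exact Fin.ext h2
    · rw [dif_pos hx, dif_neg hy, Fin.mk.injEq] at hxy
      have := (g ⟨(x : ℕ), hx⟩).isLt
      omega
    · rw [dif_neg hx, dif_pos hy, Fin.mk.injEq] at hxy
      have := (g ⟨(y : ℕ), hy⟩).isLt
      omega
    · rw [dif_neg hx, dif_neg hy, Fin.mk.injEq] at hxy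
      exact Fin.ext (by omega)

@[simp] lemma extEmb_castAdd (g : Fin a ↪ Fin b) (x : Fin a) :
    extEmb g N (Fin.castAdd N x) = Fin.castAdd N (g x) := by
  apply Fin.ext
  change (if h : _ then _ else _ : Fin (b + N)).val = _
  rw [dif_pos (by simp)]
  simp

lemma extEmb_id : extEmb (Function.Embedding.refl (Fin a)) N = Function.Embedding.refl _ := by
  ext x
  simp only [extEmb, Function.Embedding.coeFn_mk, Function.Embedding.refl_apply]
  split <;> simp <;> omega

lemma extEmb_trans (g : Fin a ↪ Fin b) (h : Fin b ↪ Fin c) :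
    extEmb (g.trans h) N = (extEmb g N).trans (extEmb h N) := by
  ext x
  change (if h : _ then _ else _ : Fin (c + N)).val =
    (extEmb h N (if h : _ then _ else _ : Fin (b + N))).val
  by_cases hx : (x : ℕ) < a
  · rw [dif_pos hx, dif_pos hx]
    change _ = (if h : _ then _ else _ : Fin (c + N)).val
    rw [dif_pos (g ⟨x, hx⟩).isLt]
    rfl
  · have hb : ¬ ((x : ℕ) - a + b < b) := by omega
    rw [dif_neg hx, dif_neg hx]
    change _ = (if h : _ then _ else _ : Fin (c + N)).val
    rw [dif_neg hb]
    simp only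
    omega
end EXT

@[ext] structure FImObj (m : ℕ) where
  n : Fin m → ℕ

instance FImCat (m : ℕ) : Category (FImObj m) where
  Hom A B := ∀ j, Fin (A.n j) ↪ Fin (B.n j)
  id A := fun _ => Function.Embedding.refl _
  comp f g := fun j => (f j).trans (g j)

abbrev FImMod (m : ℕ) (k : Type) [CommRing k] := FImObj m ⥤ ModuleCat.{0} k

variable {m : ℕ} {k : Type} [CommRing k]

@[simp] lemma FIm_comp_apply {A B C : FImObj m} (f : A ⟶ B) (g : B ⟶ C) (j : Fin m) :
    (f ≫ g) j = (f j).trans (g j) := rfl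

/-- Add `c` boxes in each coordinate. -/
def addObj (A : FImObj m) (c : Fin m → ℕ) : FImObj m := ⟨fun j => A.n j + c j⟩

/-- The endofunctor of `FI^m` adding `c j` elements in the `j`-th coordinate. -/
def iotaFun (m : ℕ) (c : Fin m → ℕ) : FImObj m ⥤ FImObj m where
  obj A := addObj A c
  map f := fun j => extEmb (f j) (c j)
  map_id A := by
    funext j
    exact extEmb_id
  map_comp f g := by
    funext j
    exact extEmb_trans _ _

/-- The shift functor `Σ_c` on `FI^m`-modules. -/
def shiftFun (m : ℕ) (k : Type) [CommRing k] (c : Fin m → ℕ) : FImMod m k ⥤ FImMod m k :=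
  (Functor.whiskeringLeft (FImObj m) (FImObj m) (ModuleCat k)).obj (iotaFun m c)

/-- The standard inclusion `[n] → [n + c]`. -/
def stdIncl (A : FImObj m) (c : Fin m → ℕ) : A ⟶ addObj A c :=
  fun j => ⟨Fin.castAdd (c j), Fin.castAdd_injective _ _⟩

lemma stdIncl_naturality {A B : FImObj m} (f : A ⟶ B) (c : Fin m → ℕ) :
    f ≫ stdIncl B c = stdIncl A c ≫ (iotaFun m c).map f := by
  funext j
  refine Function.Embedding.ext fun x => ?_
  exact (extEmb_castAdd (f j) x).symm

/-- The natural transformation `V ⟶ Σ_c V`. -/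
def shiftUnit (m : ℕ) (k : Type) [CommRing k] (c : Fin m → ℕ) :
    𝟭 (FImMod m k) ⟶ shiftFun m k c where
  app V :=
    { app := fun A => V.map (stdIncl A c)
      naturality := fun A B f => by
        dsimp [shiftFun]
        exact (V.map_comp _ _).symm.trans ((congrArg V.map (stdIncl_naturality f c)).trans
          (V.map_comp _ _)) }
  naturality V W φ := by
    apply NatTrans.ext
    funext A
    exact (φ.naturality (stdIncl A c)).symm

/-- A submodule (subfunctor) of an `FI^m`-module. -/
structure FImSub (V : FImMod m k) where
  toFun : ∀ A : FImObj m, Submodule k (V.obj A)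
  map_mem : ∀ {A B : FImObj m} (f : A ⟶ B) (x : V.obj A), x ∈ toFun A → V.map f x ∈ toFun B

/-- The `FI^m`-module determined by a subfunctor. -/
def subToMod {V : FImMod m k} (P : FImSub V) : FImMod m k where
  obj A := ModuleCat.of k (P.toFun A)
  map f := ModuleCat.ofHom ((V.map f).hom.restrict (fun x hx => P.map_mem f x hx))
  map_id A := by
    apply ModuleCat.hom_ext
    apply LinearMap.ext
    intro x
    apply Subtype.ext
    change (V.map (𝟙 A)) x.1 = x.1
    rw [V.map_id]
    rfl
  map_comp f g := by
    apply ModuleCat.hom_ext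
    apply LinearMap.ext
    intro x
    apply Subtype.ext
    change (V.map (f ≫ g)) x.1 = (V.map g) ((V.map f) x.1)
    rw [V.map_comp]
    rfl

/-- The inclusion of a subfunctor. -/
def subInclusion {V : FImMod m k} (P : FImSub V) : subToMod P ⟶ V where
  app A := ModuleCat.ofHom (P.toFun A).subtype
  naturality A B f := rfl

/-- The quotient of an `FI^m`-module by a subfunctor. -/
def quotBySub (V : FImMod m k) (P : FImSub V) : FImMod m k where
  obj A := ModuleCat.of k ((V.obj A) ⧸ P.toFun A)
  map f := ModuleCat.ofHom
    (Submodule.mapQ (P.toFun _) (P.toFun _) (V.map f).hom (fun x hx => P.map_mem f x hx))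
  map_id A := by
    apply ModuleCat.hom_ext
    apply Submodule.linearMap_qext
    apply LinearMap.ext
    intro x
    change Submodule.Quotient.mk ((V.map (𝟙 A)) x) = _
    rw [V.map_id]
    rfl
  map_comp f g := by
    apply ModuleCat.hom_ext
    apply Submodule.linearMap_qext
    apply LinearMap.ext
    intro x
    change Submodule.Quotient.mk ((V.map (f ≫ g)) x) = _
    rw [V.map_comp]
    rfl

/-- The projection onto the quotient. -/
def quotProjection (V : FImMod m k) (P : FImSub V) : V ⟶ quotBySub V P where
  app A := ModuleCat.ofHom (P.toFun A).mkQ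
  naturality A B f := rfl

lemma torsion_square {V : FImMod m k} {A B : FImObj m} (f : A ⟶ B) (N : ℕ) (x : V.obj A)
    (hx : V.map (stdIncl A (fun _ => N)) x = 0) :
    V.map (stdIncl B (fun _ => N)) (V.map f x) = 0 := by
  have h1 : V.map f ≫ V.map (stdIncl B (fun _ => N)) =
      V.map (stdIncl A (fun _ => N)) ≫ V.map ((iotaFun m (fun _ => N)).map f) := by
    exact (V.map_comp _ _).symm.trans ((congrArg V.map (stdIncl_naturality f _)).trans
      (V.map_comp _ _))
  have := ConcreteCategory.congr_hom h1 x
  change (V.map f ≫ V.map (stdIncl B fun _ => N)) x = _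
  rw [this]
  change (V.map ((iotaFun m fun _ => N).map f)) ((V.map (stdIncl A fun _ => N)) x) = 0
  rw [hx]
  exact map_zero (V.map _).hom

/-- The `B`-torsion subfunctor. -/
def torsionSub (V : FImMod m k) : FImSub V where
  toFun A := ⨆ N : ℕ, LinearMap.ker (V.map (stdIncl A (fun _ => N))).hom
  map_mem {A B} f x hx := by
    refine Submodule.iSup_induction (x := x)
      (fun N => LinearMap.ker (V.map (stdIncl A (fun _ => N))).hom)
      (motive := fun y => V.map f y ∈ ⨆ N : ℕ, LinearMap.ker (V.map (stdIncl B (fun _ => N))).hom)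
      hx ?_ ?_ ?_
    · intro N y hy
      exact Submodule.mem_iSup_of_mem N (torsion_square f N y hy)
    · dsimp only; rw [map_zero]; exact Submodule.zero_mem _
    · intro y z hy hz
      dsimp only; rw [map_add]; exact Submodule.add_mem _ hy hz

/-- The `B`-torsion functor `H⁰_B`. -/
def torsionFunctor (m : ℕ) (k : Type) [CommRing k] : FImMod m k ⥤ FImMod m k where
  obj V := subToMod (torsionSub V)
  map {V W} φ :=
    { app := fun A => ModuleCat.ofHom ((φ.app A).hom.restrict (p := (torsionSub V).toFun A)
        (q := (torsionSub W).toFun A) (fun x hx => by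
          refine Submodule.iSup_induction (x := x)
            (fun N => LinearMap.ker (V.map (stdIncl A (fun _ => N))).hom)
            (motive := fun y => φ.app A y ∈ ⨆ N : ℕ, LinearMap.ker (W.map (stdIncl A (fun _ => N))).hom)
            hx ?_ ?_ ?_
          · intro N y hy
            refine Submodule.mem_iSup_of_mem N ?_
            have h2 := ConcreteCategory.congr_hom (φ.naturality (stdIncl A (fun _ => N))) y
            change (φ.app (addObj A fun _ => N)) ((V.map (stdIncl A fun _ => N)) y) =
              (W.map (stdIncl A fun _ => N)) ((φ.app A) y) at h2
            change (W.map (stdIncl A fun _ => N)) ((φ.app A) y) = 0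
            rw [← h2, LinearMap.mem_ker.mp hy, map_zero]
          · dsimp only; rw [map_zero]; exact Submodule.zero_mem _
          · intro y z hy hz
            dsimp only; rw [map_add]; exact Submodule.add_mem _ hy hz))
      naturality := fun A B f => by
        apply ModuleCat.hom_ext
        apply LinearMap.ext
        intro x
        apply Subtype.ext
        exact ConcreteCategory.congr_hom (φ.naturality f) x.1 }
  map_id V := by
    apply NatTrans.ext
    funext A
    apply ModuleCat.hom_ext
    apply LinearMap.ext
    intro x
    rfl
  map_comp φ ψ := by
    apply NatTrans.ext
    funext A
    apply ModuleCat.hom_ext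
    apply LinearMap.ext
    intro x
    rfl

/-- The product of symmetric groups `S_{r_1} × ⋯ × S_{r_m}`. -/
abbrev SymGrp (m : ℕ) (r : Fin m → ℕ) := ∀ j, Equiv.Perm (Fin (r j))

/-- The inclusion of the one-object groupoid on `S_r` into `FI^m`, sending the unique
object to `[r]`. -/
def inclFun (m : ℕ) (r : Fin m → ℕ) : SingleObj (SymGrp m r) ⥤ FImObj m where
  obj _ := ⟨r⟩
  map σ := fun j => (σ j).toEmbedding
  map_id _ := rfl
  map_comp _ _ := rfl

set_option synthInstance.maxHeartbeats 1000000 in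
/-- The induced `FI^m`-module `M(W)` on a `k[S_r]`-module `W` (presented as a functor
on the one-object groupoid of `S_r`), defined as a left Kan extension. -/
noncomputable def inducedModule {m : ℕ} {k : Type} [CommRing k] (r : Fin m → ℕ)
    (W : SingleObj (SymGrp m r) ⥤ ModuleCat.{0} k) : FImMod m k :=
  ((inclFun m r).lan).obj W

variable {m : ℕ} {k : Type} [CommRing k]

/-- `V` is (isomorphic to) an induced module generated in degree `r`. -/
def IsInducedAt (r : Fin m → ℕ) (V : FImMod m k) : Prop :=
  ∃ W : SingleObj (SymGrp m r) ⥤ ModuleCat.{0} k, Nonempty (V ≅ inducedModule r W)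

/-- `V` is induced. -/
def IsInduced (V : FImMod m k) : Prop := ∃ r : Fin m → ℕ, IsInducedAt r V

/-- `V` is semi-induced: it admits a finite filtration with induced cofactors. -/
inductive IsSemiInduced : FImMod m k → Prop where
  | of_isZero {V : FImMod m k} (h : Limits.IsZero V) : IsSemiInduced V
  | of_ext {S : ShortComplex (FImMod m k)} (hS : S.ShortExact)
      (h1 : IsInduced S.X₁) (h3 : IsSemiInduced S.X₃) : IsSemiInduced S.X₂

/-- `V` is semi-induced generated in degree `r`. -/
inductive IsSemiInducedAt (r : Fin m → ℕ) : FImMod m k → Prop where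
  | of_isZero {V : FImMod m k} (h : Limits.IsZero V) : IsSemiInducedAt r V
  | of_ext {S : ShortComplex (FImMod m k)} (hS : S.ShortExact)
      (h1 : IsInducedAt r S.X₁) (h3 : IsSemiInducedAt r S.X₃) : IsSemiInducedAt r S.X₂

/-- `V` is semi-induced generated in an integral degree `z` (which is only possible in a
nontrivial way when `z` has nonnegative coordinates). -/
def IsSemiInducedAtZ (z : Fin m → ℤ) (V : FImMod m k) : Prop :=
  (∃ d : Fin m → ℕ, (∀ j, (d j : ℤ) = z j) ∧ IsSemiInducedAt d V) ∨
    (¬ (∀ j, 0 ≤ z j) ∧ Limits.IsZero V)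

/-- Finite generation of an `FI^m`-module. -/
def FImMod.FG (V : FImMod m k) : Prop :=
  ∃ S : Set (Σ A : FImObj m, V.obj A), S.Finite ∧
    ∀ P : FImSub V, (∀ v ∈ S, v.2 ∈ P.toFun v.1) → ∀ A, P.toFun A = ⊤

/-- The maximal `B`-torsion-free quotient `V_F = V / V_T`. -/
def torsionQuot (V : FImMod m k) : FImMod m k := quotBySub V (torsionSub V)

/-- The free module `M(a) = k[Hom_{FI^m}(a, –)]`, i.e. the induced module on the regular
representation. -/
noncomputable def Mfree (m : ℕ) (k : Type) [CommRing k] (a : Fin m → ℕ) : FImMod m k :=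
  coyoneda.obj (Opposite.op (⟨a⟩ : FImObj m)) ⋙ ModuleCat.free k

/-- A morphism in `FI^m` is a transition (non-invertible) iff it strictly increases some
coordinate. -/
def IsTransition {A B : FImObj m} (_f : A ⟶ B) : Prop := ∃ j, A.n j < B.n j

/-- A `B`-torsion element. -/
def IsTorsionElt (V : FImMod m k) {A : FImObj m} (x : V.obj A) : Prop :=
  ∃ (B : FImObj m) (f : A ⟶ B), IsTransition f ∧ V.map f x = 0

/-- A `B`-torsion module. -/
def IsBTorsion (V : FImMod m k) : Prop := ∀ (A : FImObj m) (x : V.obj A), IsTorsionElt V x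

/-- A `B`-torsion-free module. -/
def IsBTorsionFree (V : FImMod m k) : Prop :=
  ∀ (A : FImObj m) (x : V.obj A), IsTorsionElt V x → x = 0

lemma isTransition_comp {A B C : FImObj m} (f : A ⟶ B) (g : B ⟶ C) (hf : IsTransition f) :
    IsTransition (f ≫ g) := by
  obtain ⟨j, hj⟩ := hf
  refine ⟨j, lt_of_lt_of_le hj ?_⟩
  simpa using Fintype.card_le_of_embedding (g j)

/-- The subfunctor of elements in the image of some transition map. -/
def degenSub (V : FImMod m k) : FImSub V where
  toFun A := ⨆ p : Σ' (B : FImObj m) (f : B ⟶ A), IsTransition f,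
    LinearMap.range (V.map p.2.1).hom
  map_mem {A B} g x hx := by
    refine Submodule.iSup_induction (x := x)
      (fun p : Σ' (C : FImObj m) (f : C ⟶ A), IsTransition f =>
        LinearMap.range (V.map p.2.1).hom)
      (motive := fun y => V.map g y ∈ ⨆ p : Σ' (C : FImObj m) (f : C ⟶ B), IsTransition f,
        LinearMap.range (V.map p.2.1).hom) hx ?_ ?_ ?_
    · rintro ⟨C, f, hf⟩ y ⟨z, rfl⟩
      refine Submodule.mem_iSup_of_mem ⟨C, f ≫ g, isTransition_comp f g hf⟩ ?_
      refine ⟨z, ?_⟩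
      rw [V.map_comp]
      rfl
    · dsimp only; rw [map_zero]; exact Submodule.zero_mem _
    · intro y z hy hz
      dsimp only; rw [map_add]; exact Submodule.add_mem _ hy hz

/-- The zeroth homology functor `H₀`. -/
def H0Fun (m : ℕ) (k : Type) [CommRing k] : FImMod m k ⥤ FImMod m k where
  obj V := quotBySub V (degenSub V)
  map {V W} φ :=
    { app := fun A => ModuleCat.ofHom (Submodule.mapQ ((degenSub V).toFun A)
        ((degenSub W).toFun A) (φ.app A).hom (by
          intro x hx
          refine Submodule.iSup_induction (x := x)
            (fun p : Σ' (C : FImObj m) (f : C ⟶ A), IsTransition f =>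
              LinearMap.range (V.map p.2.1).hom)
            (motive := fun y => φ.app A y ∈ ⨆ p : Σ' (C : FImObj m) (f : C ⟶ A), IsTransition f,
              LinearMap.range (W.map p.2.1).hom) hx ?_ ?_ ?_
          · rintro ⟨C, f, hf⟩ y ⟨z, rfl⟩
            refine Submodule.mem_iSup_of_mem ⟨C, f, hf⟩ ⟨φ.app C z, ?_⟩
            exact (ConcreteCategory.congr_hom (φ.naturality f) z).symm
          · dsimp only; rw [map_zero]; exact Submodule.zero_mem _
          · intro y z hy hz
            dsimp only; rw [map_add]; exact Submodule.add_mem _ hy hz))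
      naturality := fun A B f => by
        apply ModuleCat.hom_ext
        apply Submodule.linearMap_qext
        apply LinearMap.ext
        intro x
        exact congrArg (Submodule.Quotient.mk (p := (degenSub W).toFun B))
          (ConcreteCategory.congr_hom (φ.naturality f) x) }
  map_id V := by
    apply NatTrans.ext
    funext A
    apply ModuleCat.hom_ext
    apply Submodule.linearMap_qext
    rfl
  map_comp φ ψ := by
    apply NatTrans.ext
    funext A
    apply ModuleCat.hom_ext
    apply Submodule.linearMap_qext
    rfl

instance : (torsionFunctor m k).Additive where
  map_add {V W φ ψ} := by
    apply NatTrans.ext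
    funext A
    apply ModuleCat.hom_ext
    apply LinearMap.ext
    intro x
    rfl

instance : (H0Fun m k).Additive where
  map_add {V W φ ψ} := by
    apply NatTrans.ext
    funext A
    apply ModuleCat.hom_ext
    apply Submodule.linearMap_qext
    rfl

/-- The local cohomology `H^i_B(V)` computed from a given injective resolution. -/
noncomputable def localCohRel {V : FImMod m k} (I : InjectiveResolution V) (i : ℕ) :
    FImMod m k :=
  (((torsionFunctor m k).mapHomologicalComplex (ComplexShape.up ℕ)).obj I.cocomplex).homology i

/-- The `FI^m`-homology `H_i(V)` computed from a given projective resolution. -/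
noncomputable def homologyRel {V : FImMod m k} (P : ProjectiveResolution V) (i : ℕ) :
    FImMod m k :=
  (((H0Fun m k).mapHomologicalComplex (ComplexShape.down ℕ)).obj P.complex).homology i

section Perm

/-- Extend a permutation of `Fin a` to `Fin (a+N)` fixing the added elements. -/
def permExt (a N : ℕ) : Equiv.Perm (Fin a) →* Equiv.Perm (Fin (a + N)) where
  toFun σ := finSumFinEquiv.symm.trans ((σ.sumCongr (Equiv.refl (Fin N))).trans finSumFinEquiv)
  map_one' := by
    ext x
    simp
  map_mul' σ τ := by
    ext x
    simp only [Equiv.trans_apply, Equiv.Perm.mul_apply, Equiv.symm_apply_apply]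
    rcases finSumFinEquiv.symm x with y | y <;> simp

/-- Transport permutations along an equality of sizes. -/
def permCast {a b : ℕ} (h : a = b) : Equiv.Perm (Fin a) →* Equiv.Perm (Fin b) := by
  subst h; exact MonoidHom.id _

/-- Embed `S_c` into `S_d` for `c ≤ d`, fixing the extra points. -/
def permInto {c d : ℕ} (h : c ≤ d) : Equiv.Perm (Fin c) →* Equiv.Perm (Fin d) :=
  (permCast (by omega : c + (d - c) = d)).comp (permExt c (d - c))

/-- The inclusion `S_s ⊆ S_r` of products of symmetric groups, for `s ≤ r`
coordinatewise. -/
def symIncl {m : ℕ} {s r : Fin m → ℕ} (h : ∀ i, s i ≤ r i) : SymGrp m s →* SymGrp m r where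
  toFun σ := fun i => permInto (h i) (σ i)
  map_one' := funext fun i => map_one _
  map_mul' σ τ := funext fun i => map_mul _ _ _

variable {m : ℕ} {k : Type} [CommRing k]

/-- Restriction of a representation of `S_r` to `S_s` for `s ≤ r` coordinatewise. -/
def resRep {s r : Fin m → ℕ} (h : ∀ i, s i ≤ r i)
    (W : SingleObj (SymGrp m r) ⥤ ModuleCat.{0} k) : SingleObj (SymGrp m s) ⥤ ModuleCat.{0} k :=
  (symIncl h).toFunctor ⋙ W

end Perm

variable {m : ℕ} {k : Type} [CommRing k]

/-- The subfunctor `B^N · M(a)` of `M(a)` generated by the degree `a + N·(1,…,1)` part. -/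
noncomputable def BNsub (a : Fin m → ℕ) (N : ℕ) : FImSub (Mfree m k a) where
  toFun A := ⨆ f : addObj ⟨a⟩ (fun _ => N) ⟶ A, LinearMap.range ((Mfree m k a).map f).hom
  map_mem {A B} g x hx := by
    refine Submodule.iSup_induction (x := x)
      (fun f : addObj ⟨a⟩ (fun _ => N) ⟶ A => LinearMap.range ((Mfree m k a).map f).hom)
      (motive := fun y => (Mfree m k a).map g y ∈
        ⨆ f : addObj ⟨a⟩ (fun _ => N) ⟶ B, LinearMap.range ((Mfree m k a).map f).hom) hx ?_ ?_ ?_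
    · rintro f y ⟨z, rfl⟩
      refine Submodule.mem_iSup_of_mem (f ≫ g) ⟨z, ?_⟩
      rw [(Mfree m k a).map_comp]
      rfl
    · dsimp only; rw [map_zero]; exact Submodule.zero_mem _
    · intro y z hy hz
      dsimp only; rw [map_add]; exact Submodule.add_mem _ hy hz

/-- The quotient `M(a)/B^N·M(a)`. -/
noncomputable def MfreeModBN (a : Fin m → ℕ) (N : ℕ) : FImMod m k :=
  quotBySub (Mfree m k a) (BNsub a N)

/-- The subfunctor of `N`-bounded torsion (the kernel of `V ⟶ Σ_{N·(1,…,1)} V`). -/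
def boundedTorsionSub (N : ℕ) (V : FImMod m k) : FImSub V where
  toFun A := LinearMap.ker (V.map (stdIncl A (fun _ => N))).hom
  map_mem {A B} f x hx := torsion_square f N x hx

/-- The functor `V ↦ 𝓗om(kFI^m/B^N, V)`, realized as the `N`-bounded torsion subfunctor. -/
def HscriptFun (m : ℕ) (k : Type) [CommRing k] (N : ℕ) : FImMod m k ⥤ FImMod m k where
  obj V := subToMod (boundedTorsionSub N V)
  map {V W} φ :=
    { app := fun A => ModuleCat.ofHom ((φ.app A).hom.restrict
        (p := (boundedTorsionSub N V).toFun A) (q := (boundedTorsionSub N W).toFun A)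
        (fun x hx => by
          have h2 := ConcreteCategory.congr_hom (φ.naturality (stdIncl A (fun _ => N))) x
          change (φ.app (addObj A fun _ => N)) ((V.map (stdIncl A fun _ => N)) x) =
            (W.map (stdIncl A fun _ => N)) ((φ.app A) x) at h2
          change (W.map (stdIncl A fun _ => N)) ((φ.app A) x) = 0
          rw [← h2, LinearMap.mem_ker.mp hx, map_zero]))
      naturality := fun A B f => by
        apply ModuleCat.hom_ext
        apply LinearMap.ext
        intro x
        apply Subtype.ext
        exact ConcreteCategory.congr_hom (φ.naturality f) x.1 }
  map_id V := by
    apply NatTrans.ext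
    funext A
    apply ModuleCat.hom_ext
    apply LinearMap.ext
    intro x
    rfl
  map_comp φ ψ := by
    apply NatTrans.ext
    funext A
    apply ModuleCat.hom_ext
    apply LinearMap.ext
    intro x
    rfl

instance (N : ℕ) : (HscriptFun m k N).Additive where
  map_add {V W φ ψ} := by
    apply NatTrans.ext
    funext A
    apply ModuleCat.hom_ext
    apply LinearMap.ext
    intro x
    rfl

lemma stdIncl_succ (A : FImObj m) (N : ℕ) :
    stdIncl A (fun _ => N + 1) = stdIncl A (fun _ => N) ≫
      (fun j => Fin.castLEEmb (Nat.add_le_add_left (Nat.le_succ N) (A.n j)) :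
        addObj A (fun _ => N) ⟶ addObj A (fun _ => N + 1)) := by
  funext j
  exact Function.Embedding.ext fun x => rfl

lemma boundedTorsionSub_mono (N : ℕ) (V : FImMod m k) (A : FImObj m) :
    (boundedTorsionSub N V).toFun A ≤ (boundedTorsionSub (N + 1) V).toFun A := by
  intro x hx
  change V.map (stdIncl A (fun _ => N + 1)) x = 0
  rw [stdIncl_succ, V.map_comp]
  change (V.map _) ((V.map (stdIncl A fun _ => N)) x) = 0
  rw [LinearMap.mem_ker.mp hx, map_zero]

/-- The natural inclusion `𝓗om(kFI^m/B^N, –) ⟶ 𝓗om(kFI^m/B^{N+1}, –)`. -/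
def HscriptIncl (m : ℕ) (k : Type) [CommRing k] (N : ℕ) :
    HscriptFun m k N ⟶ HscriptFun m k (N + 1) where
  app V :=
    { app := fun A => ModuleCat.ofHom (Submodule.inclusion (boundedTorsionSub_mono N V A))
      naturality := fun A B f => by
        apply ModuleCat.hom_ext
        apply LinearMap.ext
        intro x
        apply Subtype.ext
        rfl }
  naturality V W φ := by
    apply NatTrans.ext
    funext A
    apply ModuleCat.hom_ext
    apply LinearMap.ext
    intro x
    rfl

/-- The morphism of a quotient module induced by an endomorphism preserving the subfunctor. -/
def quotMapOf {V : FImMod m k} (P : FImSub V) (φ : V ⟶ V)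
    (h : ∀ (A : FImObj m) (x : V.obj A), x ∈ P.toFun A → φ.app A x ∈ P.toFun A) :
    quotBySub V P ⟶ quotBySub V P where
  app A := ModuleCat.ofHom (Submodule.mapQ (P.toFun A) (P.toFun A) (φ.app A).hom (h A))
  naturality A B f := by
    apply ModuleCat.hom_ext
    apply Submodule.linearMap_qext
    apply LinearMap.ext
    intro x
    exact congrArg (Submodule.Quotient.mk (p := P.toFun B))
      (ConcreteCategory.congr_hom (φ.naturality f) x)

/-- A tuple of permutations as an endomorphism of `[a]` in `FI^m`. -/
def permMor (a : Fin m → ℕ) (σ : SymGrp m a) : (⟨a⟩ : FImObj m) ⟶ ⟨a⟩ :=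
  fun j => (σ j).toEmbedding

/-- The right action of `σ ∈ S_a` on `M(a) = k[Hom(a,–)]` by precomposition. -/
noncomputable def MfreeAct (a : Fin m → ℕ) (σ : SymGrp m a) : Mfree m k a ⟶ Mfree m k a :=
  Functor.whiskerRight (coyoneda.map (permMor a σ).op) (ModuleCat.free k)

lemma MfreeAct_preserves (a : Fin m → ℕ) (σ : SymGrp m a) (N : ℕ) (A : FImObj m)
    (x : (Mfree m k a).obj A) (hx : x ∈ (BNsub a N).toFun A) :
    (MfreeAct a σ).app A x ∈ (BNsub (k := k) a N).toFun A := by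
  refine Submodule.iSup_induction (x := x)
    (fun f : addObj ⟨a⟩ (fun _ => N) ⟶ A => LinearMap.range ((Mfree m k a).map f).hom)
    (motive := fun y => (MfreeAct a σ).app A y ∈
      ⨆ f : addObj ⟨a⟩ (fun _ => N) ⟶ A, LinearMap.range ((Mfree m k a).map f).hom) hx ?_ ?_ ?_
  · rintro f y ⟨z, rfl⟩
    refine Submodule.mem_iSup_of_mem f ⟨(MfreeAct a σ).app _ z, ?_⟩
    exact (ConcreteCategory.congr_hom ((MfreeAct a σ).naturality f) z).symm
  · dsimp only; rw [map_zero]; exact Submodule.zero_mem _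
  · intro y z hy hz
    dsimp only; rw [map_add]; exact Submodule.add_mem _ hy hz

/-- The action of `σ ∈ S_a` on `M(a)/B^N·M(a)`. -/
noncomputable def quotAct (a : Fin m → ℕ) (N : ℕ) (σ : SymGrp m a) :
    (MfreeModBN a N : FImMod m k) ⟶ MfreeModBN a N :=
  quotMapOf (BNsub a N) (MfreeAct a σ) (MfreeAct_preserves a σ N)

open Filter

lemma Function.Embedding.exists_trans_eq {α β γ : Type*} [Finite α] (f : α ↪ β) (g : α ↪ γ)
    (h : Nonempty (β ↪ γ)) : ∃ e : β ↪ γ, f.trans e = g := by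
  obtain ⟨ι⟩ := h
  obtain ⟨σ, hσ⟩ := Equiv.Perm.exists_extending_pair (ι ∘ f) g
    (ι.injective.comp f.injective) g.injective
  exact ⟨ι.trans σ.toEmbedding, Function.Embedding.ext hσ⟩

/-- Every map out of `A` into an object at least as large as `B` factors through `f : A ⟶ B`. -/
lemma map_eq_zero_of_le {V : FImMod m k} {A B C : FImObj m} (f : A ⟶ B) (g : A ⟶ C)
    (hle : ∀ j, B.n j ≤ C.n j) {x : V.obj A} (hx : V.map f x = 0) : V.map g x = 0 := by
  choose e he using fun j => (f j).exists_trans_eq (g j) ⟨Fin.castLEEmb (hle j)⟩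
  have hg : g = f ≫ (e : B ⟶ C) := funext fun j => (he j).symm
  rw [hg, V.map_comp, ConcreteCategory.comp_apply, hx, map_zero]

lemma IsTorsionElt.eventually_map_eq_zero {V : FImMod m k} {A : FImObj m} {x : V.obj A}
    (hx : IsTorsionElt V x) :
    ∀ᶠ N in atTop, ∀ C : FImObj m, (∀ j, N ≤ C.n j) → ∀ g : A ⟶ C, V.map g x = 0 := by
  obtain ⟨B, f, -, hfx⟩ := hx
  filter_upwards [eventually_ge_atTop (Finset.univ.sup B.n)] with N hN C hC g
  exact map_eq_zero_of_le f g
    (fun j => (Finset.le_sup (Finset.mem_univ j)).trans (hN.trans (hC j))) hfx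

def vanishingSub (V : FImMod m k) (C : FImObj m) : FImSub V where
  toFun A := ⨅ g : A ⟶ C, LinearMap.ker (V.map g).hom
  map_mem f x hx := by
    simp only [Submodule.mem_iInf, LinearMap.mem_ker] at hx ⊢
    intro g
    simpa using hx (f ≫ g)

lemma subsingleton_obj_of_generators_vanish {V : FImMod m k}
    {S : Set (Σ A : FImObj m, V.obj A)}
    (hS : ∀ P : FImSub V, (∀ v ∈ S, v.2 ∈ P.toFun v.1) → ∀ A, P.toFun A = ⊤) {C : FImObj m}
    (hvan : ∀ v ∈ S, ∀ g : v.1 ⟶ C, V.map g v.2 = 0) : Subsingleton (V.obj C) := by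
  have htop := hS (vanishingSub V C) (fun v hv => by simpa [vanishingSub] using hvan v hv) C
  refine subsingleton_of_forall_eq 0 fun x => ?_
  have hx : x ∈ (vanishingSub V C).toFun C := htop ▸ Submodule.mem_top
  simpa using (Submodule.mem_iInf _).mp hx (𝟙 C)

theorem stmt7_general (m : ℕ) (k : Type) [CommRing k] (V : FImMod m k)
    (hfg : FImMod.FG V) (htor : IsBTorsion V) :
    ∃ N : ℕ, 0 < N ∧ ∀ r : Fin m → ℕ, (∀ i, N ≤ r i) → Subsingleton (V.obj ⟨r⟩) := by
  obtain ⟨S, hSfin, hS⟩ := hfg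
  have hgen : ∀ᶠ N in atTop, ∀ v ∈ S, ∀ C : FImObj m, (∀ j, N ≤ C.n j) →
      ∀ g : v.1 ⟶ C, V.map g v.2 = 0 :=
    (eventually_all_finite hSfin).mpr fun v _ => (htor v.1 v.2).eventually_map_eq_zero
  obtain ⟨N, hNpos, hN⟩ := ((eventually_gt_atTop 0).and hgen).exists
  exact ⟨N, hNpos, fun r hr => subsingleton_obj_of_generators_vanish hS fun v hv g =>
    hN v hv ⟨r⟩ hr g⟩

/-- a finitely generated `B`-torsion `FI^m`-module over a Noetherian ring
vanishes in all large enough diagonal degrees. -/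
theorem stmt7 (m : ℕ) (k : Type) [CommRing k] [IsNoetherianRing k] (V : FImMod m k)
    (hfg : FImMod.FG V) (htor : IsBTorsion V) :
    ∃ N : ℕ, 0 < N ∧ ∀ r : Fin m → ℕ, (∀ i, N ≤ r i) → Subsingleton (V.obj ⟨r⟩) :=
  stmt7_general m k V hfg htor
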